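/- Suppose q/p is not a root of unity and let α' ∈ ℂ. On the complex vector space with basis {v_j : j ∈ ℤ}, define operators L_n (n ∈ ℤ) by L_n v_j = p^{−j}[j]_{p,q} v_{n+j} for j ≠ −n, and L_n v_{−n} = (p^n [−n]_{p,q} + p^n q^{−n} [−n]_{p,q} [n+1]_{p,q} α') v_0. Then these operators satisfy the V_{p,q}-module relation: for all m, n ∈ ℤ and all j ∈ ℤ, (p^{−n} q^n L_n L_m − p^{−m} q^m L_m L_n) v_j = ([m]_{p,q}/p^m − [n]_{p,q}/p^n) L_{m+n} v_j; that is, V'_{p,q}(α') is a V_{p,q}-module. -/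

import Mathlib

/-- The `(p,q)`-quantum integer `[n]_{p,q} = (p^n - q^n)/(p - q)`. -/
noncomputable def qint (p q : ℂ) (n : ℤ) : ℂ := (p ^ n - q ^ n) / (p - q)

/-- The defining relation of a `V_{p,q}`-module. -/
def IsVpqModule (p q : ℂ) {M : Type} [AddCommGroup M] [Module ℂ M]
    (L : ℤ → M →ₗ[ℂ] M) : Prop :=
  ∀ m n : ℤ, ∀ v : M,
    (p ^ (-n) * q ^ n) • L n (L m v) - (p ^ (-m) * q ^ m) • L m (L n v) =
      (qint p q m / p ^ m - qint p q n / p ^ n) • L (m + n) v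

/-- The module `V'_{p,q}(α')`: `L_n v_j = p^{-j}[j] v_{n+j}` for `j ≠ -n` and
`L_n v_{-n} = (p^n[-n] + p^n q^{-n} [-n][n+1] α') v_0`. -/
noncomputable def Lalpha' (p q α' : ℂ) (n : ℤ) : (ℤ →₀ ℂ) →ₗ[ℂ] (ℤ →₀ ℂ) :=
  Finsupp.lsum ℂ fun j =>
    (if j = -n then
        p ^ n * qint p q (-n) + p ^ n * q ^ (-n) * qint p q (-n) * qint p q (n + 1) * α'
      else p ^ (-j) * qint p q j) • Finsupp.lsingle (n + j)

/-- The coefficient of `L_n` on the basis vector `v_j`. -/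
noncomputable def cf (p q α' : ℂ) (n j : ℤ) : ℂ :=
  if j = -n then p ^ n * qint p q (-n) + p ^ n * q ^ (-n) * qint p q (-n) * qint p q (n + 1) * α'
  else p ^ (-j) * qint p q j

lemma Lalpha'_single (p q α' : ℂ) (n j : ℤ) (b : ℂ) :
    Lalpha' p q α' n (Finsupp.single j b) = Finsupp.single (n + j) (cf p q α' n j * b) := by
  rw [Lalpha', Finsupp.lsum_single, ← cf]
  rw [LinearMap.smul_apply, Finsupp.lsingle_apply, Finsupp.smul_single, smul_eq_mul]

lemma coefLem (x y : ℂ) (k : ℤ) : x ^ (-k) * y ^ k = y ^ k / x ^ k := by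
  rw [zpow_neg]; ring

/-- Regular coefficient as a single fraction. -/
lemma reg (p q : ℂ) (j : ℤ) :
    p ^ (-j) * qint p q j = (p ^ j - q ^ j) / (p ^ j * (p - q)) := by
  rw [qint, zpow_neg, ← one_div, div_mul_div_comm, one_mul]

/-- Regular coefficient at a negated index, with positive-power denominator. -/
lemma regN (p q : ℂ) (hp : p ≠ 0) (hq : q ≠ 0) (hpq : p ≠ q) (k : ℤ) :
    p ^ (- -k) * qint p q (-k) = (q ^ k - p ^ k) / (q ^ k * (p - q)) := by
  have hd : p - q ≠ 0 := sub_ne_zero.mpr hpq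
  have h1 : p ^ k ≠ 0 := zpow_ne_zero _ hp
  have h2 : q ^ k ≠ 0 := zpow_ne_zero _ hq
  rw [qint, neg_neg]
  simp only [zpow_neg]
  field_simp

/-- Regular coefficient at a difference index, with positive-power denominator. -/
lemma regNM (p q : ℂ) (hp : p ≠ 0) (hq : q ≠ 0) (hpq : p ≠ q) (a b : ℤ) :
    p ^ (-(a + -b)) * qint p q (a + -b) =
      (p ^ a * q ^ b - q ^ a * p ^ b) / (p ^ a * q ^ b * (p - q)) := by
  have hd : p - q ≠ 0 := sub_ne_zero.mpr hpq
  have h1 : p ^ a ≠ 0 := zpow_ne_zero _ hp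
  have h2 : q ^ a ≠ 0 := zpow_ne_zero _ hq
  have h3 : p ^ b ≠ 0 := zpow_ne_zero _ hp
  have h4 : q ^ b ≠ 0 := zpow_ne_zero _ hq
  rw [qint]
  simp only [neg_add, neg_neg, zpow_add₀ hp, zpow_add₀ hq, zpow_neg]
  field_simp

/-- Special coefficient as a single fraction. -/
lemma spec (p q α' : ℂ) (hp : p ≠ 0) (hq : q ≠ 0) (hpq : p ≠ q) (n : ℤ) :
    p ^ n * qint p q (-n) + p ^ n * q ^ (-n) * qint p q (-n) * qint p q (n + 1) * α' =
      ((q ^ n * q ^ n - p ^ n * q ^ n) * (p - q) + (q ^ n - p ^ n) * (p ^ n * p - q ^ n * q) * α')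
        / (q ^ n * q ^ n * ((p - q) * (p - q))) := by
  have hd : p - q ≠ 0 := sub_ne_zero.mpr hpq
  have hpn : p ^ n ≠ 0 := zpow_ne_zero _ hp
  have hqn : q ^ n ≠ 0 := zpow_ne_zero _ hq
  simp only [qint, zpow_add₀ hp, zpow_add₀ hq, zpow_one, zpow_neg, inv_eq_one_div]
  rw [div_sub_div _ _ hpn hqn]
  simp only [div_div, div_mul_div_comm, div_mul_eq_mul_div, ← mul_div_assoc, one_mul, mul_one]
  rw [div_add_div _ _ (by simp [mul_eq_zero, sub_eq_zero, hp, hq, hpq, hpn, hqn])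
      (by simp [mul_eq_zero, sub_eq_zero, hp, hq, hpq, hpn, hqn]),
    div_eq_div_iff (by simp [mul_eq_zero, sub_eq_zero, hp, hq, hpq, hpn, hqn])
      (by simp [mul_eq_zero, sub_eq_zero, hp, hq, hpq, hpn, hqn])]
  ring

set_option maxHeartbeats 1000000 in
lemma key_identity (p q α' : ℂ) (hp : p ≠ 0) (hq : q ≠ 0) (hpq : p ≠ q) (m n j : ℤ) :
    p ^ (-n) * q ^ n * (cf p q α' n (m + j) * cf p q α' m j)
      - p ^ (-m) * q ^ m * (cf p q α' m (n + j) * cf p q α' n j)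
    = (qint p q m / p ^ m - qint p q n / p ^ n) * cf p q α' (m + n) j := by
  have hd : p - q ≠ 0 := sub_ne_zero.mpr hpq
  have hpm : p ^ m ≠ 0 := zpow_ne_zero _ hp
  have hpn : p ^ n ≠ 0 := zpow_ne_zero _ hp
  have hpj : p ^ j ≠ 0 := zpow_ne_zero _ hp
  have hqm : q ^ m ≠ 0 := zpow_ne_zero _ hq
  have hqn : q ^ n ≠ 0 := zpow_ne_zero _ hq
  have hqj : q ^ j ≠ 0 := zpow_ne_zero _ hq
  simp only [cf]
  split_ifs
  all_goals try (exfalso; omega)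
  -- case 1 : n = 0, m = 0, j = 0
  · obtain rfl : n = 0 := by omega
    obtain rfl : m = 0 := by omega
    obtain rfl : j = 0 := by omega
    norm_num [qint]
  -- case 2 : n = 0, j = -m, m ≠ 0
  · obtain rfl : n = 0 := by omega
    obtain rfl : j = -m := by omega
    rw [show m + (0 : ℤ) = m from by ring]
    rw [spec p q α' hp hq hpq 0, spec p q α' hp hq hpq m, regN p q hp hq hpq m,
      coefLem p q 0, coefLem p q m]
    simp only [qint]
    simp only [zpow_add₀ hp, zpow_add₀ hq, zpow_zero, zpow_one]
    simp only [div_div, div_mul_div_comm, div_mul_eq_mul_div, ← mul_div_assoc]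
    rw [div_sub_div _ _ (by simp [mul_eq_zero, sub_eq_zero, hp, hq, hpq, hpm, hpn, hpj, hqm, hqn, hqj]) (by simp [mul_eq_zero, sub_eq_zero, hp, hq, hpq, hpm, hpn, hpj, hqm, hqn, hqj])]
    rw [div_sub_div _ _ (by simp [mul_eq_zero, sub_eq_zero, hp, hq, hpq, hpm, hpn, hpj, hqm, hqn, hqj]) (by simp [mul_eq_zero, sub_eq_zero, hp, hq, hpq, hpm, hpn, hpj, hqm, hqn, hqj])]
    simp only [div_mul_eq_mul_div, div_div]
    rw [div_eq_div_iff (by simp [mul_eq_zero, sub_eq_zero, hp, hq, hpq, hpm, hpn, hpj, hqm, hqn, hqj]) (by simp [mul_eq_zero, sub_eq_zero, hp, hq, hpq, hpm, hpn, hpj, hqm, hqn, hqj])]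
    ring
  -- case 3 : m = 0, j = -n, n ≠ 0
  · obtain rfl : m = 0 := by omega
    obtain rfl : j = -n := by omega
    rw [show (0 : ℤ) + n = n from by ring]
    rw [spec p q α' hp hq hpq 0, spec p q α' hp hq hpq n, regN p q hp hq hpq n,
      coefLem p q 0, coefLem p q n]
    simp only [qint]
    simp only [zpow_add₀ hp, zpow_add₀ hq, zpow_zero, zpow_one]
    simp only [div_div, div_mul_div_comm, div_mul_eq_mul_div, ← mul_div_assoc]
    rw [div_sub_div _ _ (by simp [mul_eq_zero, sub_eq_zero, hp, hq, hpq, hpm, hpn, hpj, hqm, hqn, hqj]) (by simp [mul_eq_zero, sub_eq_zero, hp, hq, hpq, hpm, hpn, hpj, hqm, hqn, hqj])]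
    rw [div_sub_div _ _ (by simp [mul_eq_zero, sub_eq_zero, hp, hq, hpq, hpm, hpn, hpj, hqm, hqn, hqj]) (by simp [mul_eq_zero, sub_eq_zero, hp, hq, hpq, hpm, hpn, hpj, hqm, hqn, hqj])]
    simp only [div_mul_eq_mul_div, div_div]
    rw [div_eq_div_iff (by simp [mul_eq_zero, sub_eq_zero, hp, hq, hpq, hpm, hpn, hpj, hqm, hqn, hqj]) (by simp [mul_eq_zero, sub_eq_zero, hp, hq, hpq, hpm, hpn, hpj, hqm, hqn, hqj])]
    ring
  -- case 4 : j = -(m+n), j ≠ -m, j ≠ -n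
  · obtain rfl : j = -(m + n) := by omega
    rw [spec p q α' hp hq hpq n, spec p q α' hp hq hpq m, spec p q α' hp hq hpq (m + n),
      regN p q hp hq hpq (m + n), coefLem p q n, coefLem p q m]
    simp only [qint]
    simp only [zpow_add₀ hp, zpow_add₀ hq, zpow_zero, zpow_one]
    simp only [div_div, div_mul_div_comm, div_mul_eq_mul_div, ← mul_div_assoc]
    rw [div_sub_div _ _ (by simp [mul_eq_zero, sub_eq_zero, hp, hq, hpq, hpm, hpn, hpj, hqm, hqn, hqj]) (by simp [mul_eq_zero, sub_eq_zero, hp, hq, hpq, hpm, hpn, hpj, hqm, hqn, hqj])]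
    rw [div_sub_div _ _ (by simp [mul_eq_zero, sub_eq_zero, hp, hq, hpq, hpm, hpn, hpj, hqm, hqn, hqj]) (by simp [mul_eq_zero, sub_eq_zero, hp, hq, hpq, hpm, hpn, hpj, hqm, hqn, hqj])]
    simp only [div_mul_eq_mul_div, div_div]
    rw [div_eq_div_iff (by simp [mul_eq_zero, sub_eq_zero, hp, hq, hpq, hpm, hpn, hpj, hqm, hqn, hqj]) (by simp [mul_eq_zero, sub_eq_zero, hp, hq, hpq, hpm, hpn, hpj, hqm, hqn, hqj])]
    ring
  -- case 5 : j = -m, n = m (and m ≠ 0)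
  · obtain rfl : j = -m := by omega
    obtain rfl : n = m := by omega
    rw [show n + -n = (0 : ℤ) from by ring]
    rw [spec p q α' hp hq hpq n, reg p q 0, regN p q hp hq hpq n, coefLem p q n]
    simp only [qint]
    simp only [zpow_add₀ hp, zpow_add₀ hq, zpow_zero, zpow_one]
    simp only [div_div, div_mul_div_comm, div_mul_eq_mul_div, ← mul_div_assoc]
    rw [div_sub_div _ _ (by simp [mul_eq_zero, sub_eq_zero, hp, hq, hpq, hpm, hpn, hpj, hqm, hqn, hqj]) (by simp [mul_eq_zero, sub_eq_zero, hp, hq, hpq, hpm, hpn, hpj, hqm, hqn, hqj])]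
    rw [div_sub_div _ _ (by simp [mul_eq_zero, sub_eq_zero, hp, hq, hpq, hpm, hpn, hpj, hqm, hqn, hqj]) (by simp [mul_eq_zero, sub_eq_zero, hp, hq, hpq, hpm, hpn, hpj, hqm, hqn, hqj])]
    simp only [div_mul_eq_mul_div, div_div]
    rw [div_eq_div_iff (by simp [mul_eq_zero, sub_eq_zero, hp, hq, hpq, hpm, hpn, hpj, hqm, hqn, hqj]) (by simp [mul_eq_zero, sub_eq_zero, hp, hq, hpq, hpm, hpn, hpj, hqm, hqn, hqj])]
    ring
  -- case 6 : j = -m, j ≠ -n, j ≠ -(m+n)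
  · obtain rfl : j = -m := by omega
    rw [show m + -m = (0 : ℤ) from by ring]
    rw [spec p q α' hp hq hpq m, reg p q 0, regNM p q hp hq hpq n m,
      regN p q hp hq hpq m, coefLem p q n, coefLem p q m]
    simp only [qint]
    simp only [zpow_add₀ hp, zpow_add₀ hq, zpow_zero, zpow_one]
    simp only [div_div, div_mul_div_comm, div_mul_eq_mul_div, ← mul_div_assoc]
    rw [div_sub_div _ _ (by simp [mul_eq_zero, sub_eq_zero, hp, hq, hpq, hpm, hpn, hpj, hqm, hqn, hqj]) (by simp [mul_eq_zero, sub_eq_zero, hp, hq, hpq, hpm, hpn, hpj, hqm, hqn, hqj])]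
    rw [div_sub_div _ _ (by simp [mul_eq_zero, sub_eq_zero, hp, hq, hpq, hpm, hpn, hpj, hqm, hqn, hqj]) (by simp [mul_eq_zero, sub_eq_zero, hp, hq, hpq, hpm, hpn, hpj, hqm, hqn, hqj])]
    simp only [div_mul_eq_mul_div, div_div]
    rw [div_eq_div_iff (by simp [mul_eq_zero, sub_eq_zero, hp, hq, hpq, hpm, hpn, hpj, hqm, hqn, hqj]) (by simp [mul_eq_zero, sub_eq_zero, hp, hq, hpq, hpm, hpn, hpj, hqm, hqn, hqj])]
    ring
  -- case 7 : j = -n, j ≠ -m, j ≠ -(m+n)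
  · obtain rfl : j = -n := by omega
    rw [show n + -n = (0 : ℤ) from by ring]
    rw [spec p q α' hp hq hpq n, reg p q 0, regNM p q hp hq hpq m n,
      regN p q hp hq hpq n, coefLem p q n, coefLem p q m]
    simp only [qint]
    simp only [zpow_add₀ hp, zpow_add₀ hq, zpow_zero, zpow_one]
    simp only [div_div, div_mul_div_comm, div_mul_eq_mul_div, ← mul_div_assoc]
    rw [div_sub_div _ _ (by simp [mul_eq_zero, sub_eq_zero, hp, hq, hpq, hpm, hpn, hpj, hqm, hqn, hqj]) (by simp [mul_eq_zero, sub_eq_zero, hp, hq, hpq, hpm, hpn, hpj, hqm, hqn, hqj])]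
    rw [div_sub_div _ _ (by simp [mul_eq_zero, sub_eq_zero, hp, hq, hpq, hpm, hpn, hpj, hqm, hqn, hqj]) (by simp [mul_eq_zero, sub_eq_zero, hp, hq, hpq, hpm, hpn, hpj, hqm, hqn, hqj])]
    simp only [div_mul_eq_mul_div, div_div]
    rw [div_eq_div_iff (by simp [mul_eq_zero, sub_eq_zero, hp, hq, hpq, hpm, hpn, hpj, hqm, hqn, hqj]) (by simp [mul_eq_zero, sub_eq_zero, hp, hq, hpq, hpm, hpn, hpj, hqm, hqn, hqj])]
    ring
  -- case 8 : generic
  · rw [reg p q (m + j), reg p q (n + j), reg p q j, coefLem p q n, coefLem p q m]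
    simp only [qint]
    simp only [zpow_add₀ hp, zpow_add₀ hq, zpow_zero, zpow_one]
    simp only [div_div, div_mul_div_comm, div_mul_eq_mul_div, ← mul_div_assoc]
    rw [div_sub_div _ _ (by simp [mul_eq_zero, sub_eq_zero, hp, hq, hpq, hpm, hpn, hpj, hqm, hqn, hqj]) (by simp [mul_eq_zero, sub_eq_zero, hp, hq, hpq, hpm, hpn, hpj, hqm, hqn, hqj])]
    rw [div_sub_div _ _ (by simp [mul_eq_zero, sub_eq_zero, hp, hq, hpq, hpm, hpn, hpj, hqm, hqn, hqj]) (by simp [mul_eq_zero, sub_eq_zero, hp, hq, hpq, hpm, hpn, hpj, hqm, hqn, hqj])]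
    simp only [div_mul_eq_mul_div, div_div]
    rw [div_eq_div_iff (by simp [mul_eq_zero, sub_eq_zero, hp, hq, hpq, hpm, hpn, hpj, hqm, hqn, hqj]) (by simp [mul_eq_zero, sub_eq_zero, hp, hq, hpq, hpm, hpn, hpj, hqm, hqn, hqj])]
    ring

/-- The operators of `V'_{p,q}(α')` satisfy the `V_{p,q}`-module relation. -/
theorem Valpha'_is_VpqModule (p q : ℂ) (hp : p ≠ 0) (hq : q ≠ 0) (hpq : p ≠ q)
    (hroot : ∀ n : ℤ, n ≠ 0 → (q / p) ^ n ≠ 1) (α' : ℂ) :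
    IsVpqModule p q (Lalpha' p q α') := by
  intro m n v
  induction v using Finsupp.induction_linear with
  | zero => simp only [map_zero, smul_zero, sub_zero]
  | add f g hf hg =>
    simp only [map_add, smul_add]
    rw [← hf, ← hg]
    abel
  | single j b =>
    rw [Lalpha'_single, Lalpha'_single, Lalpha'_single, Lalpha'_single, Lalpha'_single,
      Finsupp.smul_single, Finsupp.smul_single, Finsupp.smul_single,
      show n + (m + j) = m + n + j by ring, show m + (n + j) = m + n + j by ring,
      ← Finsupp.single_sub]
    refine congrArg _ ?_
    simp only [smul_eq_mul]
    linear_combination b * key_identity p q α' hp hq hpq m n j
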